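/- Let X and Y be real Hilbert spaces, A, V : X → Y bounded linear operators, G : X → ℝ a γ_G-strongly convex function and F* : Y → ℝ a γ_{F*}-strongly convex function. Let constants satisfy 0 < μ̃_G < μ_G < γ_G, 0 < μ̃_{F*} < μ_{F*} < γ_{F*}, and μ̃_G·μ̃_{F*} ≥ (1/4)·‖A − V‖². Set c = min{(μ_G − μ̃_G)/(μ_G·μ̃_G), (μ_{F*} − μ̃_{F*})/(μ_{F*}·μ̃_{F*})}. Let τ satisfy 0 < τ < min{1/‖A − V‖, c} and let θ satisfy 0 < θ < 2 − 2τ/c. Suppose sequences (x^k), (v^k), (p^k) in X and (y^k), (w^k), (q^k) in Y follow the primal-dual Douglas–Rachford iteration with mismatched adjoint with step size τ and relaxation parameter θ, and suppose x̂ ∈ X, ŷ ∈ Y are such that −V*(ŷ) is a subgradient of G at x̂ and A(x̂) is a subgradient of F* at ŷ. Then (x^k, y^k) converges weakly to (x̂, ŷ), i.e., for every a ∈ X and b ∈ Y, ⟪x^k, a⟫ + ⟪y^k, b⟫ → ⟪x̂, a⟫ + ⟪ŷ, b⟫ as k → ∞. -/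

import Mathlib

open scoped RealInnerProductSpace

/-- `g` is a subgradient of `f` at `x`. -/
def IsSubgradientAt {E : Type*} [NormedAddCommGroup E] [InnerProductSpace ℝ E]
    (f : E → ℝ) (g x : E) : Prop :=
  ∀ z, f x + ⟪g, z - x⟫ ≤ f z

/-- `f` is `γ`-strongly convex: `x ↦ f x − (γ/2)‖x‖²` is convex. -/
def IsStronglyConvex {E : Type*} [NormedAddCommGroup E] [InnerProductSpace ℝ E]
    (γ : ℝ) (f : E → ℝ) : Prop :=
  0 < γ ∧ ConvexOn ℝ Set.univ (fun x => f x - γ / 2 * ‖x‖ ^ 2)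

/-! The point `(p̂, q̂) = (x̂ - τ V* ŷ, ŷ + τ A x̂)` is a fixed point of the iteration, and
`‖p^k - p̂‖² + ‖q^k - q̂‖²` is a Lyapunov function. Strong monotonicity of `∂G` and `∂F*`, applied
to the prox steps, makes it drop by `2θτ (γ_G ‖x^{k+1} - x̂‖² + γ_{F*} ‖y^{k+1} - ŷ‖²)` plus a
multiple of the relaxation residuals, up to the mismatch term `2θτ ⟪(A - V)(v - x̂), w - ŷ⟫`.
Bounding `‖A - V‖` by `2 √(μ̃_G μ̃_{F*})` and splitting
`μ̃ ‖v - x̂‖² ≤ μ ‖x - x̂‖² + μ μ̃ / (μ - μ̃) ‖v - x‖²`, the margins `γ - μ > 0` and the step-size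
conditions absorb that term. Telescoping, `‖x^k - x̂‖²` and `‖y^k - ŷ‖²` are summable, so the
iterates even converge in norm. -/

open Filter Topology
open scoped InnerProduct

theorem le_of_forall_mem_Ioo_le_add_mul {a b C : ℝ} (h : ∀ t ∈ Set.Ioo (0 : ℝ) 1, a ≤ b + t * C) :
    a ≤ b := by
  have hlim : Tendsto (fun t => b + t * C) (𝓝[>] 0) (𝓝 b) := by
    simpa using (tendsto_nhdsWithin_of_tendsto_nhds
      ((continuous_id.mul continuous_const).tendsto (0 : ℝ))).const_add b
  refine ge_of_tendsto hlim ?_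
  filter_upwards [Ioo_mem_nhdsGT one_pos] with t ht using h t ht

section StrongConvexity

variable {E : Type*} [NormedAddCommGroup E] [InnerProductSpace ℝ E] {γ : ℝ} {f : E → ℝ}

theorem IsStronglyConvex.add_inner_add_sq_le (hf : IsStronglyConvex γ f) {g x : E}
    (hg : IsSubgradientAt f g x) (z : E) :
    f x + ⟪g, z - x⟫ + γ / 2 * ‖z - x‖ ^ 2 ≤ f z := by
  set d := z - x
  -- Compare the subgradient inequality at `x + t • d` with convexity of `f - γ/2 ‖·‖²` on the
  -- segment `[x, z]`, divide by `t`, and let `t → 0`.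
  refine le_of_forall_mem_Ioo_le_add_mul (C := γ / 2 * ‖d‖ ^ 2) fun t ⟨ht0, ht1⟩ => ?_
  have hconv := hf.2.2 (Set.mem_univ x) (Set.mem_univ z) (sub_nonneg.2 ht1.le) ht0.le
    (sub_add_cancel 1 t)
  have hsub := hg (x + t • d)
  rw [show (1 - t) • x + t • z = x + t • d by module] at hconv
  rw [add_sub_cancel_left, real_inner_smul_right] at hsub
  simp only [smul_eq_mul] at hconv
  have hxt : ‖x + t • d‖ ^ 2 = ‖x‖ ^ 2 + 2 * t * ⟪x, d⟫ + t ^ 2 * ‖d‖ ^ 2 := by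
    rw [norm_add_sq_real, real_inner_smul_right, norm_smul, Real.norm_eq_abs, mul_pow, sq_abs]
    ring
  have hz : ‖z‖ ^ 2 = ‖x‖ ^ 2 + 2 * ⟪x, d⟫ + ‖d‖ ^ 2 := by
    rw [← norm_add_sq_real, add_sub_cancel]
  refine le_of_mul_le_mul_left ?_ ht0
  linear_combination hsub + hconv + γ / 2 * (hxt - t * hz)

theorem IsStronglyConvex.mul_norm_sub_sq_le_inner (hf : IsStronglyConvex γ f) {g₁ g₂ x₁ x₂ : E}
    (h₁ : IsSubgradientAt f g₁ x₁) (h₂ : IsSubgradientAt f g₂ x₂) :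
    γ * ‖x₁ - x₂‖ ^ 2 ≤ ⟪g₁ - g₂, x₁ - x₂⟫ := by
  have h₁₂ := hf.add_inner_add_sq_le h₁ x₂
  have h₂₁ := hf.add_inner_add_sq_le h₂ x₁
  rw [norm_sub_rev, ← neg_sub, inner_neg_right] at h₁₂
  rw [inner_sub_left]
  linarith

theorem IsStronglyConvex.one_add_mul_norm_sub_sq_le_inner (hf : IsStronglyConvex γ f) {τ : ℝ}
    (hτ : 0 < τ) {p₁ p₂ x₁ x₂ : E} (h₁ : IsSubgradientAt f ((1 / τ) • (p₁ - x₁)) x₁)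
    (h₂ : IsSubgradientAt f ((1 / τ) • (p₂ - x₂)) x₂) :
    (1 + τ * γ) * ‖x₁ - x₂‖ ^ 2 ≤ ⟪p₁ - p₂, x₁ - x₂⟫ := by
  have h := hf.mul_norm_sub_sq_le_inner h₁ h₂
  rw [← smul_sub, sub_sub_sub_comm, real_inner_smul_left, inner_sub_left,
    real_inner_self_eq_norm_sq, one_div, le_inv_mul_iff₀ hτ] at h
  linarith

end StrongConvexity

section InnerProductInequalities

variable {E F : Type*} [NormedAddCommGroup E] [InnerProductSpace ℝ E]
  [NormedAddCommGroup F] [InnerProductSpace ℝ F]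

theorem mul_norm_add_sq_le {μ μ' : ℝ} (h : μ' < μ) (a b : E) :
    μ' * ‖a + b‖ ^ 2 ≤ μ * ‖a‖ ^ 2 + μ * μ' / (μ - μ') * ‖b‖ ^ 2 := by
  have hδ : 0 < μ - μ' := sub_pos.2 h
  have hsq : ‖(μ - μ') • a - μ' • b‖ ^ 2
      = (μ - μ') ^ 2 * ‖a‖ ^ 2 - 2 * (μ - μ') * μ' * ⟪a, b⟫ + μ' ^ 2 * ‖b‖ ^ 2 := by
    rw [norm_sub_sq_real, norm_smul, norm_smul, real_inner_smul_left, real_inner_smul_right,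
      Real.norm_eq_abs, Real.norm_eq_abs, mul_pow, mul_pow, sq_abs, sq_abs]
    ring
  have hid : μ * ‖a‖ ^ 2 + μ * μ' / (μ - μ') * ‖b‖ ^ 2 - μ' * ‖a + b‖ ^ 2
      = ‖(μ - μ') • a - μ' • b‖ ^ 2 / (μ - μ') := by
    rw [hsq, norm_add_sq_real]
    field_simp
    ring
  have : 0 ≤ ‖(μ - μ') • a - μ' • b‖ ^ 2 / (μ - μ') := by positivity
  linarith

theorem inner_apply_le_of_opNorm_sq_le (T : E →L[ℝ] F) {α β : ℝ} (hα : 0 ≤ α) (hβ : 0 ≤ β)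
    (hT : 1 / 4 * ‖T‖ ^ 2 ≤ α * β) (u : E) (w : F) :
    ⟪T u, w⟫ ≤ α * ‖u‖ ^ 2 + β * ‖w‖ ^ 2 := by
  have hCS : ⟪T u, w⟫ ≤ ‖T‖ * ‖u‖ * ‖w‖ :=
    (real_inner_le_norm _ _).trans (mul_le_mul_of_nonneg_right (T.le_opNorm u) (norm_nonneg w))
  refine hCS.trans (le_of_pow_le_pow_left₀ two_ne_zero (by positivity) ?_)
  nlinarith [mul_le_mul_of_nonneg_right hT (sq_nonneg (‖u‖ * ‖w‖)),
    sq_nonneg (α * ‖u‖ ^ 2 - β * ‖w‖ ^ 2)]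

-- In the iteration, `P - 2 • d + e` is the coupling term `-τ • V† (w - ŷ)`, resp. `τ • A (v - x̂)`.
theorem norm_add_smul_sub_sq_eq (P d e : E) (θ : ℝ) :
    ‖P + θ • (e - d)‖ ^ 2 = ‖P‖ ^ 2 - 2 * θ * (⟪P, d⟫ - ‖d‖ ^ 2)
      - θ * (2 - θ) * ‖e - d‖ ^ 2 + 2 * θ * ⟪P - (2 : ℝ) • d + e, e⟫ := by
  simp only [← real_inner_self_eq_norm_sq, inner_add_left, inner_add_right, inner_sub_left,
    inner_sub_right, real_inner_smul_left, real_inner_smul_right, real_inner_comm d e,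
    real_inner_comm d P, real_inner_comm e P]
  ring

end InnerProductInequalities

theorem summable_of_add_le_of_nonneg {E a : ℕ → ℝ} (hE : ∀ k, 0 ≤ E k) (ha : ∀ k, 0 ≤ a k)
    (h : ∀ k, E (k + 1) + a k ≤ E k) : Summable a := by
  have htel : ∀ n, ∑ i ∈ Finset.range n, a i + E n ≤ E 0 := by
    intro n
    induction n with
    | zero => simp
    | succ n ih => rw [Finset.sum_range_succ]; linarith [h n]
  exact summable_of_sum_range_le ha fun n => by linarith [htel n, hE n]

theorem tendsto_of_summable_norm_sub_sq {E : Type*} [SeminormedAddCommGroup E] {u : ℕ → E}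
    {z : E} (h : Summable fun k => ‖u k - z‖ ^ 2) : Tendsto u atTop (𝓝 z) := by
  rw [tendsto_iff_norm_sub_tendsto_zero]
  simpa [Real.sqrt_sq (norm_nonneg _)] using h.tendsto_atTop_zero.sqrt

section PrimalDualDouglasRachford

variable {X Y : Type*} [NormedAddCommGroup X] [InnerProductSpace ℝ X] [CompleteSpace X]
  [NormedAddCommGroup Y] [InnerProductSpace ℝ Y] [CompleteSpace Y]
  {A V : X →L[ℝ] Y} {G : X → ℝ} {Fs : Y → ℝ} {γG γFs τ θ : ℝ} {xh p x v : X} {yh q y w : Y}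

theorem pddr_energy_le (hG : IsStronglyConvex γG G) (hFs : IsStronglyConvex γFs Fs)
    (hτ : 0 < τ) (hθ : 0 ≤ θ)
    (hxh : IsSubgradientAt G (-(V†) yh) xh) (hyh : IsSubgradientAt Fs (A xh) yh)
    (hx : IsSubgradientAt G ((1 / τ) • (p - x)) x) (hy : IsSubgradientAt Fs ((1 / τ) • (q - y)) y)
    (hv : v + τ • (V†) w = (2 : ℝ) • x - p) (hw : w - τ • A v = (2 : ℝ) • y - q) :
    ‖p + θ • (v - x) - (xh - τ • (V†) yh)‖ ^ 2 + ‖q + θ • (w - y) - (yh + τ • A xh)‖ ^ 2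
      ≤ ‖p - (xh - τ • (V†) yh)‖ ^ 2 + ‖q - (yh + τ • A xh)‖ ^ 2
        - 2 * θ * τ * (γG * ‖x - xh‖ ^ 2 + γFs * ‖y - yh‖ ^ 2)
        - θ * (2 - θ) * (‖v - x‖ ^ 2 + ‖w - y‖ ^ 2)
        + 2 * θ * τ * ⟪(A - V) (v - xh), w - yh⟫ := by
  have hxh' : IsSubgradientAt G ((1 / τ) • (xh - τ • (V†) yh - xh)) xh := by
    rwa [sub_sub_cancel_left, smul_neg, smul_smul, one_div_mul_cancel hτ.ne', one_smul]
  have hyh' : IsSubgradientAt Fs ((1 / τ) • (yh + τ • A xh - yh)) yh := by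
    rwa [add_sub_cancel_left, smul_smul, one_div_mul_cancel hτ.ne', one_smul]
  have hmx := hG.one_add_mul_norm_sub_sq_le_inner hτ hx hxh'
  have hmy := hFs.one_add_mul_norm_sub_sq_le_inner hτ hy hyh'
  have hP : p - (xh - τ • (V†) yh) - (2 : ℝ) • (x - xh) + (v - xh) = -(τ • (V†) (w - yh)) := by
    rw [map_sub]
    linear_combination (norm := module) hv
  have hQ : q - (yh + τ • A xh) - (2 : ℝ) • (y - yh) + (w - yh) = τ • A (v - xh) := by
    rw [map_sub]
    linear_combination (norm := module) hw
  have eP : ‖p + θ • (v - x) - (xh - τ • (V†) yh)‖ ^ 2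
      = ‖p - (xh - τ • (V†) yh)‖ ^ 2 - 2 * θ * (⟪p - (xh - τ • (V†) yh), x - xh⟫ - ‖x - xh‖ ^ 2)
        - θ * (2 - θ) * ‖v - x‖ ^ 2 - 2 * θ * τ * ⟪V (v - xh), w - yh⟫ := by
    rw [show p + θ • (v - x) - (xh - τ • (V†) yh)
        = p - (xh - τ • (V†) yh) + θ • (v - xh - (x - xh)) by module,
      norm_add_smul_sub_sq_eq, hP, sub_sub_sub_cancel_right, inner_neg_left, real_inner_smul_left,
      ContinuousLinearMap.adjoint_inner_left, real_inner_comm (V (v - xh))]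
    ring
  have eQ : ‖q + θ • (w - y) - (yh + τ • A xh)‖ ^ 2
      = ‖q - (yh + τ • A xh)‖ ^ 2 - 2 * θ * (⟪q - (yh + τ • A xh), y - yh⟫ - ‖y - yh‖ ^ 2)
        - θ * (2 - θ) * ‖w - y‖ ^ 2 + 2 * θ * τ * ⟪A (v - xh), w - yh⟫ := by
    rw [show q + θ • (w - y) - (yh + τ • A xh)
        = q - (yh + τ • A xh) + θ • (w - yh - (y - yh)) by module,
      norm_add_smul_sub_sq_eq, hQ, sub_sub_sub_cancel_right, real_inner_smul_left]
    ring
  rw [eP, eQ, sub_apply, inner_sub_left (A (v - xh))]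
  linarith [mul_le_mul_of_nonneg_left hmx (by positivity : (0 : ℝ) ≤ 2 * θ),
    mul_le_mul_of_nonneg_left hmy (by positivity : (0 : ℝ) ≤ 2 * θ)]

theorem pddr_energy_descent (hG : IsStronglyConvex γG G) (hFs : IsStronglyConvex γFs Fs)
    {μG μFs μtG μtFs : ℝ} (hμtG : 0 < μtG) (hμG : μtG < μG) (hμtFs : 0 < μtFs) (hμFs : μtFs < μFs)
    (hmm : 1 / 4 * ‖A - V‖ ^ 2 ≤ μtG * μtFs) (hτ : 0 < τ) (hθ : 0 ≤ θ)
    (hθG : θ + 2 * τ / ((μG - μtG) / (μG * μtG)) ≤ 2)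
    (hθFs : θ + 2 * τ / ((μFs - μtFs) / (μFs * μtFs)) ≤ 2)
    {ε : ℝ} (hεG : ε ≤ γG - μG) (hεFs : ε ≤ γFs - μFs)
    (hxh : IsSubgradientAt G (-(V†) yh) xh) (hyh : IsSubgradientAt Fs (A xh) yh)
    (hx : IsSubgradientAt G ((1 / τ) • (p - x)) x) (hy : IsSubgradientAt Fs ((1 / τ) • (q - y)) y)
    (hv : v + τ • (V†) w = (2 : ℝ) • x - p) (hw : w - τ • A v = (2 : ℝ) • y - q) :
    ‖p + θ • (v - x) - (xh - τ • (V†) yh)‖ ^ 2 + ‖q + θ • (w - y) - (yh + τ • A xh)‖ ^ 2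
        + 2 * θ * τ * ε * (‖x - xh‖ ^ 2 + ‖y - yh‖ ^ 2)
      ≤ ‖p - (xh - τ • (V†) yh)‖ ^ 2 + ‖q - (yh + τ • A xh)‖ ^ 2 := by
  have henergy := pddr_energy_le hG hFs hτ hθ hxh hyh hx hy hv hw
  have hmismatch := inner_apply_le_of_opNorm_sq_le (A - V) hμtG.le hμtFs.le hmm (v - xh) (w - yh)
  have hsplitG := mul_norm_add_sq_le hμG (x - xh) (v - x)
  have hsplitFs := mul_norm_add_sq_le hμFs (y - yh) (w - y)
  rw [sub_add_sub_cancel'] at hsplitG hsplitFs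
  rw [div_div_eq_mul_div, mul_div_assoc] at hθG hθFs
  have h2θτ : 0 ≤ 2 * θ * τ := by positivity
  linarith [mul_le_mul_of_nonneg_left (hmismatch.trans (add_le_add hsplitG hsplitFs)) h2θτ,
    mul_le_mul_of_nonneg_right hθG (mul_nonneg hθ (sq_nonneg ‖v - x‖)),
    mul_le_mul_of_nonneg_right hθFs (mul_nonneg hθ (sq_nonneg ‖w - y‖)),
    mul_le_mul_of_nonneg_left (mul_le_mul_of_nonneg_right hεG (sq_nonneg ‖x - xh‖)) h2θτ,
    mul_le_mul_of_nonneg_left (mul_le_mul_of_nonneg_right hεFs (sq_nonneg ‖y - yh‖)) h2θτ]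

end PrimalDualDouglasRachford

/-- Weak convergence of the primal-dual Douglas–Rachford method with mismatched adjoint
to a fixed point, for admissible step size `τ` and relaxation parameter `θ`. -/
theorem pddr_mismatch_weak_convergence
    {X Y : Type*} [NormedAddCommGroup X] [InnerProductSpace ℝ X] [CompleteSpace X]
    [NormedAddCommGroup Y] [InnerProductSpace ℝ Y] [CompleteSpace Y]
    (A V : X →L[ℝ] Y) (G : X → ℝ) (Fs : Y → ℝ) (γG γFs : ℝ)
    (hG : IsStronglyConvex γG G) (hFs : IsStronglyConvex γFs Fs)
    (μG μFs μtG μtFs : ℝ)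
    (hμtG : 0 < μtG) (hμG : μtG < μG) (hμGγ : μG < γG)
    (hμtFs : 0 < μtFs) (hμFs : μtFs < μFs) (hμFsγ : μFs < γFs)
    (hmm : (1 / 4) * ‖A - V‖ ^ 2 ≤ μtG * μtFs)
    (c : ℝ) (hc : c = min ((μG - μtG) / (μG * μtG)) ((μFs - μtFs) / (μFs * μtFs)))
    (τ θ : ℝ) (hτ0 : 0 < τ) (hτ : τ < min (1 / ‖A - V‖) c)
    (hθ0 : 0 < θ) (hθ : θ < 2 - 2 * τ / c)
    (PG : X → X) (PF : Y → Y)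
    (hPG : ∀ p z, G (PG p) + ⟪(1 / τ) • (p - PG p), z - PG p⟫ ≤ G z)
    (hPF : ∀ q z, Fs (PF q) + ⟪(1 / τ) • (q - PF q), z - PF q⟫ ≤ Fs z)
    (x v p : ℕ → X) (y w q : ℕ → Y)
    (hx : ∀ k, x (k + 1) = PG (p k))
    (hy : ∀ k, y (k + 1) = PF (q k))
    (hv : ∀ k, v (k + 1) + τ • (ContinuousLinearMap.adjoint V) (w (k + 1)) =
      (2 : ℝ) • x (k + 1) - p k)
    (hw : ∀ k, w (k + 1) - τ • A (v (k + 1)) = (2 : ℝ) • y (k + 1) - q k)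
    (hp : ∀ k, p (k + 1) = p k + θ • (v (k + 1) - x (k + 1)))
    (hq : ∀ k, q (k + 1) = q k + θ • (w (k + 1) - y (k + 1)))
    (xh : X) (yh : Y)
    (hxh : IsSubgradientAt G (-(ContinuousLinearMap.adjoint V) yh) xh)
    (hyh : IsSubgradientAt Fs (A xh) yh) :
    ∀ (a : X) (b : Y),
      Filter.Tendsto (fun k => ⟪x k, a⟫ + ⟪y k, b⟫) Filter.atTop
        (nhds (⟪xh, a⟫ + ⟪yh, b⟫)) := by
  intro a b
  have hc0 : 0 < c := hτ0.trans (hτ.trans_le (min_le_right _ _))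
  have hθδ : ∀ δ, c ≤ δ → θ + 2 * τ / δ ≤ 2 := fun δ hδ => by
    have := div_le_div_of_nonneg_left (by positivity : (0 : ℝ) ≤ 2 * τ) hc0 hδ
    linarith
  set E : ℕ → ℝ := fun k => ‖p k - (xh - τ • (V†) yh)‖ ^ 2 + ‖q k - (yh + τ • A xh)‖ ^ 2
  set κ := 2 * θ * τ * min (γG - μG) (γFs - μFs)
  have hκ : 0 < κ := by have := lt_min (sub_pos.2 hμGγ) (sub_pos.2 hμFsγ); positivity
  have hdesc : ∀ k, E (k + 1) + κ * (‖x (k + 1) - xh‖ ^ 2 + ‖y (k + 1) - yh‖ ^ 2) ≤ E k :=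
    fun k => by
      simpa only [E, κ, hp k, hq k] using pddr_energy_descent hG hFs hμtG hμG hμtFs hμFs hmm hτ0
        hθ0.le (hθδ _ (hc ▸ min_le_left _ _)) (hθδ _ (hc ▸ min_le_right _ _))
        (min_le_left _ _) (min_le_right _ _) hxh hyh (hx k ▸ hPG (p k)) (hy k ▸ hPF (q k))
        (hv k) (hw k)
  have hsum := summable_of_add_le_of_nonneg (fun k => by positivity) (fun k => by positivity) hdesc
  rw [summable_mul_left_iff hκ.ne'] at hsum
  have hxlim : Tendsto x atTop (𝓝 xh) := (tendsto_add_atTop_iff_nat 1).mp <|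
    tendsto_of_summable_norm_sub_sq <| hsum.of_nonneg_of_le (fun k => by positivity)
      fun k => le_add_of_nonneg_right (by positivity)
  have hylim : Tendsto y atTop (𝓝 yh) := (tendsto_add_atTop_iff_nat 1).mp <|
    tendsto_of_summable_norm_sub_sq <| hsum.of_nonneg_of_le (fun k => by positivity)
      fun k => le_add_of_nonneg_left (by positivity)
  exact (hxlim.inner tendsto_const_nhds).add (hylim.inner tendsto_const_nhds)
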